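/- arXiv:2209.00686 — 2 statements merged into one kernel-verified Lean document; each statement's English description precedes it below -/
import Mathlib

section
/- Let Ω be a finite nonempty set, κ ∈ K_d, D ⊆ L κ-coherent, and let P_D(f) := sup{μ ∈ ℝ : f − μ ∈ D} be the induced lower prevision. Then the closure of D in the topology of pointwise convergence on L (the product topology on ℝ^Ω) equals {f ∈ L : P_D(f) ≥ 0}. -/
open Set

/-- The set of gambles: bounded real-valued functions on `Ω`. -/
def Gambles (Ω : Type*) : Set (Ω → ℝ) := {f | ∃ M : ℝ, ∀ ω, |f ω| ≤ M}

/-- `L⁺`: the positive gambles. -/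
def Lpos (Ω : Type*) : Set (Ω → ℝ) := {f ∈ Gambles Ω | 0 ≤ f ∧ f ≠ 0}

/-- `L⁻₀`: the nonpositive gambles. -/
def Lneg0 (Ω : Type*) : Set (Ω → ℝ) := {f ∈ Gambles Ω | f ≤ 0}

/-- A closure operator on the subsets of the set of gambles. -/
structure IsClosureOp (Ω : Type*) (κ : Set (Ω → ℝ) → Set (Ω → ℝ)) : Prop where
  maps_to : ∀ D ⊆ Gambles Ω, κ D ⊆ Gambles Ω
  extensive : ∀ D ⊆ Gambles Ω, D ⊆ κ D
  mono : ∀ ⦃D D' : Set (Ω → ℝ)⦄, D ⊆ Gambles Ω → D' ⊆ Gambles Ω → D ⊆ D' → κ D ⊆ κ D'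
  idem : ∀ D ⊆ Gambles Ω, κ (κ D) = κ D

/-- Natural extension `E_κ(D) = κ(D ∪ L⁺)`. -/
def natExt {Ω : Type*} (κ : Set (Ω → ℝ) → Set (Ω → ℝ)) (D : Set (Ω → ℝ)) : Set (Ω → ℝ) :=
  κ (D ∪ Lpos Ω)

/-- `D` avoids partial loss: `L⁻₀ ∩ E_κ(D) = ∅`. -/
def AvoidsPartialLoss {Ω : Type*} (κ : Set (Ω → ℝ) → Set (Ω → ℝ)) (D : Set (Ω → ℝ)) : Prop :=
  Lneg0 Ω ∩ natExt κ D = ∅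

/-- `D` is κ-coherent relative to `Q`. -/
def CoherentRel {Ω : Type*} (κ : Set (Ω → ℝ) → Set (Ω → ℝ)) (Q D : Set (Ω → ℝ)) : Prop :=
  AvoidsPartialLoss κ D ∧ Q ∩ natExt κ D ⊆ D

/-- `D` is κ-coherent: `κ(D ∪ L⁺) = D` and `D ∩ L⁻₀ = ∅`. -/
def Coherent {Ω : Type*} (κ : Set (Ω → ℝ) → Set (Ω → ℝ)) (D : Set (Ω → ℝ)) : Prop :=
  D ⊆ Gambles Ω ∧ κ (D ∪ Lpos Ω) = D ∧ D ∩ Lneg0 Ω = ∅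

/-- A set of gambles is closed under dominance. -/
def ClosedUnderDominance {Ω : Type*} (G : Set (Ω → ℝ)) : Prop :=
  G = {g | g ∈ Gambles Ω ∧ ∃ f ∈ G, f ≤ g}

/-- `K_d`: closure operators all of whose coherent sets are closed under dominance. -/
def InKd {Ω : Type*} (κ : Set (Ω → ℝ) → Set (Ω → ℝ)) : Prop :=
  IsClosureOp Ω κ ∧ ∀ D : Set (Ω → ℝ), Coherent κ D → ClosedUnderDominance D

/-- Lower prevision induced by `D`: `P_D(f) = sup {μ : f - μ ∈ D}`. -/
noncomputable def lowPrev {Ω : Type*} (D : Set (Ω → ℝ)) (f : Ω → ℝ) : ℝ :=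
  sSup {μ : ℝ | (f - fun _ => μ) ∈ D}

/-- Upper prevision induced by `D`: `Q_D(f) = inf {μ : μ - f ∈ D}`. -/
noncomputable def upPrev {Ω : Type*} (D : Set (Ω → ℝ)) (f : Ω → ℝ) : ℝ :=
  sInf {μ : ℝ | ((fun _ => μ) - f) ∈ D}

open Filter Topology

/-!
On a finite `Ω` a κ-coherent set `D` with `κ ∈ K_d` is an upper set in the pointwise order, so
`{μ | f - μ ∈ D}` is a lower set of reals and `0 ≤ P_D(f)` says exactly that `f + ε ∈ D` for
every `ε > 0`. For an upper set in the finite product `ℝ^Ω` the latter is in turn equivalent to `f`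
lying in the closure: a point of `D` near `f` lies below `f + ε`, and `f + ε → f` as `ε → 0⁺`.
-/

theorem mem_gambles_of_finite {Ω : Type*} [Finite Ω] (f : Ω → ℝ) : f ∈ Gambles Ω :=
  Finite.exists_le _

theorem ClosedUnderDominance.isUpperSet {Ω : Type*} [Finite Ω] {G : Set (Ω → ℝ)}
    (hG : ClosedUnderDominance G) : IsUpperSet G := by
  intro f g hfg hf
  rw [hG]
  exact ⟨mem_gambles_of_finite g, f, hf, hfg⟩

theorem IsUpperSet.mem_closure_iff_forall_add_const_mem {Ω : Type*} [Finite Ω]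
    {D : Set (Ω → ℝ)} (hD : IsUpperSet D) {f : Ω → ℝ} :
    f ∈ closure D ↔ ∀ ε > 0, (f + fun _ => ε) ∈ D := by
  constructor
  · intro hf ε hε
    have hopen : IsOpen {g : Ω → ℝ | ∀ ω, g ω < f ω + ε} := by
      simp only [ofPred_forall]
      exact isOpen_iInter_of_finite fun ω => isOpen_lt (continuous_apply ω) continuous_const
    obtain ⟨g, hgf, hgD⟩ :=
      mem_closure_iff.mp hf _ hopen fun ω => (lt_add_iff_pos_right _).mpr hε
    exact hD (fun ω => (hgf ω).le) hgD
  · intro h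
    have hlim : Tendsto (fun ε : ℝ => f + fun _ => ε) (𝓝[>] 0) (𝓝 f) := by
      have hcont : Continuous fun ε : ℝ => f + fun _ => ε := by fun_prop
      simpa only [Pi.add_def, add_zero] using (hcont.tendsto 0).mono_left nhdsWithin_le_nhds
    exact mem_closure_of_tendsto hlim (eventually_mem_nhdsWithin.mono h)

theorem IsLowerSet.le_csSup_iff {α : Type*} [ConditionallyCompleteLinearOrder α]
    [DenselyOrdered α] {S : Set α} (hS : IsLowerSet S) (hne : S.Nonempty) (hbdd : BddAbove S)
    {a : α} : a ≤ sSup S ↔ ∀ b < a, b ∈ S := by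
  constructor
  · intro ha b hb
    obtain ⟨c, hcS, hbc⟩ := exists_lt_of_lt_csSup hne (hb.trans_le ha)
    exact hS hbc.le hcS
  · intro h
    refine le_of_forall_lt fun c hc => ?_
    obtain ⟨d, hcd, hda⟩ := exists_between hc
    exact hcd.trans_le (le_csSup hbdd (h d hda))

namespace Coherent

variable {Ω : Type*} {κ : Set (Ω → ℝ) → Set (Ω → ℝ)} {D : Set (Ω → ℝ)}

theorem lpos_subset (hκ : IsClosureOp Ω κ) (hD : Coherent κ D) : Lpos Ω ⊆ D := by
  have hsub : D ∪ Lpos Ω ⊆ Gambles Ω := union_subset hD.1 fun _ hf => hf.1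
  have hext := hκ.extensive _ hsub
  rw [hD.2.1] at hext
  exact fun f hf => hext (Or.inr hf)

theorem exists_pos_of_mem (hD : Coherent κ D) {f : Ω → ℝ} (hf : f ∈ D) : ∃ ω, 0 < f ω := by
  by_contra! hle
  have hloss : f ∈ D ∩ Lneg0 Ω := ⟨hf, hD.1 hf, hle⟩
  rwa [hD.2.2] at hloss

variable [Finite Ω]

theorem isUpperSet (hκ : InKd κ) (hD : Coherent κ D) : IsUpperSet D :=
  (hκ.2 D hD).isUpperSet

theorem isLowerSet_sub_const_mem (hκ : InKd κ) (hD : Coherent κ D) (f : Ω → ℝ) :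
    IsLowerSet {μ : ℝ | (f - fun _ => μ) ∈ D} :=
  fun _ _ hμ hf => hD.isUpperSet hκ (fun ω => sub_le_sub_left hμ (f ω)) hf

theorem sub_const_mem_nonempty [Nonempty Ω] (hκ : InKd κ) (hD : Coherent κ D) (f : Ω → ℝ) :
    {μ : ℝ | (f - fun _ => μ) ∈ D}.Nonempty := by
  obtain ⟨M, hM⟩ := mem_gambles_of_finite f
  have hone : (fun _ => (1 : ℝ)) ∈ D :=
    hD.lpos_subset hκ.1 ⟨mem_gambles_of_finite _, fun _ => zero_le_one,
      fun h => one_ne_zero (congrFun h (Classical.arbitrary Ω))⟩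
  refine ⟨-(M + 1), hD.isUpperSet hκ (fun ω => ?_) hone⟩
  have hlow := (abs_le.mp (hM ω)).1
  simp only [Pi.sub_apply]
  linarith

theorem bddAbove_sub_const_mem (hD : Coherent κ D) (f : Ω → ℝ) :
    BddAbove {μ : ℝ | (f - fun _ => μ) ∈ D} := by
  obtain ⟨M, hM⟩ := mem_gambles_of_finite f
  refine ⟨M, fun μ hμ => ?_⟩
  obtain ⟨ω, hω⟩ := hD.exists_pos_of_mem hμ
  have hup := (abs_le.mp (hM ω)).2
  simp only [Pi.sub_apply, sub_pos] at hω
  linarith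

theorem nonneg_lowPrev_iff [Nonempty Ω] (hκ : InKd κ) (hD : Coherent κ D) (f : Ω → ℝ) :
    0 ≤ lowPrev D f ↔ ∀ ε > 0, (f + fun _ => ε) ∈ D := by
  rw [lowPrev, (hD.isLowerSet_sub_const_mem hκ f).le_csSup_iff (hD.sub_const_mem_nonempty hκ f)
    (hD.bddAbove_sub_const_mem f)]
  constructor
  · intro h ε hε
    have hmem : (f - fun _ => -ε) ∈ D := h (-ε) (neg_neg_of_pos hε)
    rwa [show (f - fun _ => -ε) = f + fun _ => ε from funext fun _ => sub_neg_eq_add _ _] at hmem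
  · intro h μ hμ
    have hmem := h (-μ) (neg_pos_of_neg hμ)
    rwa [show (f + fun _ => -μ) = f - fun _ => μ from funext fun _ => (sub_eq_add_neg _ _).symm]
      at hmem

end Coherent

/-- for finite `Ω`, the closure of a κ-coherent set `D` in the topology
of pointwise convergence is `{f ∈ L : P_D(f) ≥ 0}`. -/
theorem stmt14 {Ω : Type*} [Finite Ω] [Nonempty Ω] (κ : Set (Ω → ℝ) → Set (Ω → ℝ))
    (hκ : InKd κ) (D : Set (Ω → ℝ)) (hD : Coherent κ D) :
    closure D = {f | f ∈ Gambles Ω ∧ 0 ≤ lowPrev D f} := by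
  ext f
  rw [(hD.isUpperSet hκ).mem_closure_iff_forall_add_const_mem, mem_ofPred_eq,
    hD.nonneg_lowPrev_iff hκ f]
  exact (and_iff_right (mem_gambles_of_finite f)).symm
end

section
/- Let κ ∈ K_d, let D ⊆ L be κ-coherent, and let P_D(f) := sup{μ ∈ ℝ : f − μ ∈ D} be the induced lower prevision. Call a linear prevision a linear functional P on the space of bounded real-valued functions on Ω that is monotone (f ≤ g implies P(f) ≤ P(g)) and satisfies P(1) = 1, where 1 is the constant function with value 1. Then {P linear prevision : P(f) ≥ P_D(f) for all f ∈ L} = {P linear prevision : P(f) ≥ 0 for all f ∈ D}. -/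
open Set

/-- A linear prevision: a linear functional on the bounded functions on `Ω` that is
monotone and maps the constant gamble `1` to `1`. -/
def IsLinPrev {Ω : Type*} (P : (Ω → ℝ) → ℝ) : Prop :=
  (∀ f g : Ω → ℝ, f ∈ Gambles Ω → g ∈ Gambles Ω → P (f + g) = P f + P g) ∧
  (∀ (c : ℝ) (f : Ω → ℝ), f ∈ Gambles Ω → P (c • f) = c * P f) ∧
  (∀ f g : Ω → ℝ, f ∈ Gambles Ω → g ∈ Gambles Ω → f ≤ g → P f ≤ P g) ∧
  P (fun _ => 1) = 1

/-!
If `f - μ ∈ D` then `P f - μ = P (f - μ) ≥ 0` for a linear prevision `P` nonnegative on `D`,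
so `P f` bounds the set whose supremum is `P_D f`; this set is nonempty because `D ⊇ L⁺`.
Conversely, for `f ∈ D` the shift `μ = 0` is admissible and coherence bounds the admissible
shifts by `sup f`, so `0 ≤ P_D f ≤ P f`.
-/

section Gambles

variable {Ω : Type*}

lemma const_mem_gambles (c : ℝ) : (fun _ => c) ∈ Gambles Ω :=
  ⟨|c|, fun _ => le_rfl⟩

lemma sub_mem_gambles {f g : Ω → ℝ} (hf : f ∈ Gambles Ω) (hg : g ∈ Gambles Ω) :
    f - g ∈ Gambles Ω := by
  obtain ⟨M, hM⟩ := hf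
  obtain ⟨N, hN⟩ := hg
  exact ⟨M + N, fun ω => (abs_sub (f ω) (g ω)).trans (add_le_add (hM ω) (hN ω))⟩

lemma exists_sub_const_mem_lpos [Nonempty Ω] {f : Ω → ℝ} (hf : f ∈ Gambles Ω) :
    ∃ μ : ℝ, (f - fun _ => μ) ∈ Lpos Ω := by
  obtain ⟨M, hM⟩ := hf
  have hpos : ∀ ω, 0 < f ω + (M + 1) := fun ω => by linarith [neg_abs_le (f ω), hM ω]
  refine ⟨-(M + 1), sub_mem_gambles ⟨M, hM⟩ (const_mem_gambles _), fun ω => ?_, fun h => ?_⟩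
  · simp only [Pi.zero_apply, Pi.sub_apply]
    linarith [hpos ω]
  · have := congrFun h (Classical.arbitrary Ω)
    simp only [Pi.sub_apply, sub_neg_eq_add, Pi.zero_apply] at this
    linarith [hpos (Classical.arbitrary Ω)]

end Gambles

namespace IsLinPrev

variable {Ω : Type*} {P : (Ω → ℝ) → ℝ}

lemma map_const (hP : IsLinPrev P) (c : ℝ) : P (fun _ => c) = c := by
  have : (fun _ : Ω => c) = c • fun _ => 1 := by funext; simp
  rw [this, hP.2.1 c _ (const_mem_gambles 1), hP.2.2.2, mul_one]

lemma map_sub_const (hP : IsLinPrev P) {f : Ω → ℝ} (hf : f ∈ Gambles Ω) (μ : ℝ) :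
    P (f - fun _ => μ) = P f - μ := by
  have hsum := hP.1 _ _ (sub_mem_gambles hf (const_mem_gambles μ)) (const_mem_gambles μ)
  rw [sub_add_cancel, hP.map_const] at hsum
  linarith

end IsLinPrev

section Coherent

variable {Ω : Type*} {κ : Set (Ω → ℝ) → Set (Ω → ℝ)} {D : Set (Ω → ℝ)}

lemma Coherent.lpos_subset_s17 (hκ : IsClosureOp Ω κ) (hD : Coherent κ D) : Lpos Ω ⊆ D := by
  rw [← hD.2.1]
  exact (hκ.extensive _ (union_subset hD.1 fun _ hg => hg.1)).trans' subset_union_right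

lemma Coherent.bddAbove_shifts (hD : Coherent κ D) {f : Ω → ℝ} (hf : f ∈ Gambles Ω) :
    BddAbove {μ : ℝ | (f - fun _ => μ) ∈ D} := by
  obtain ⟨M, hM⟩ := hf
  refine ⟨M, fun μ hμ => ?_⟩
  by_contra! hlt
  have hneg : (f - fun _ => μ) ∈ Lneg0 Ω := ⟨hD.1 hμ, fun ω => by
    simp only [Pi.sub_apply, Pi.zero_apply]
    linarith [le_abs_self (f ω), hM ω]⟩
  exact eq_empty_iff_forall_notMem.1 hD.2.2 _ ⟨hμ, hneg⟩

lemma Coherent.lowPrev_nonneg (hD : Coherent κ D) {f : Ω → ℝ} (hf : f ∈ D) :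
    0 ≤ lowPrev D f :=
  le_csSup (hD.bddAbove_shifts (hD.1 hf)) (by simpa [← Pi.zero_def] using hf)

lemma Coherent.lowPrev_le [Nonempty Ω] (hκ : IsClosureOp Ω κ) (hD : Coherent κ D)
    {P : (Ω → ℝ) → ℝ} (hP : IsLinPrev P) (hPD : ∀ g ∈ D, 0 ≤ P g) {f : Ω → ℝ}
    (hf : f ∈ Gambles Ω) : lowPrev D f ≤ P f := by
  obtain ⟨μ₀, hμ₀⟩ := exists_sub_const_mem_lpos hf
  refine csSup_le ⟨μ₀, hD.lpos_subset_s17 hκ hμ₀⟩ fun μ hμ => ?_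
  have := hPD _ hμ
  rw [hP.map_sub_const hf] at this
  linarith

end Coherent

/-- the linear previsions dominating `P_D` on all gambles are exactly
the linear previsions that are nonnegative on `D`. -/
theorem stmt17 {Ω : Type*} [Nonempty Ω] (κ : Set (Ω → ℝ) → Set (Ω → ℝ))
    (hκ : InKd κ) (D : Set (Ω → ℝ)) (hD : Coherent κ D) :
    {P : (Ω → ℝ) → ℝ | IsLinPrev P ∧ ∀ f ∈ Gambles Ω, lowPrev D f ≤ P f} =
      {P : (Ω → ℝ) → ℝ | IsLinPrev P ∧ ∀ f ∈ D, 0 ≤ P f} := by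
  ext P
  refine ⟨fun ⟨hP, hdom⟩ => ⟨hP, fun f hf => ?_⟩, fun ⟨hP, hPD⟩ => ⟨hP, fun f hf => ?_⟩⟩
  · exact (hD.lowPrev_nonneg hf).trans (hdom f (hD.1 hf))
  · exact hD.lowPrev_le hκ.1 hP hPD hf
end
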